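/- arXiv:2505.01550 — 3 statements merged into one kernel-verified Lean document; each statement's English description precedes it below -/
import Mathlib

section
/- For all integers c ≥ 1 and n ≥ 4, the total number of colored inversions over all colored involutions of size n is given, as an equality of rational numbers, by i_n^{(c)} = ( n·c·((−1)^c + 1)/4 )·r_{n−1}^{(c)} + c·(c + 1 + (−1)^c)·C(n,2)·r_{n−2}^{(c)} + 2·c^2·((−1)^c + 2)·C(n,3)·r_{n−3}^{(c)} + 6·c^3·C(n,4)·r_{n−4}^{(c)}. -/
open Finset

/-- The inversion number of a permutation of `Fin n`:
`inv(π) = #{(i,j) : i < j, π(i) > π(j)}`. -/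
def invNum {n : ℕ} (π : Equiv.Perm (Fin n)) : ℕ :=
  ((Finset.univ : Finset (Fin n × Fin n)).filter
    (fun p => p.1 < p.2 ∧ π p.2 < π p.1)).card

/-- The colored inversion statistic on a colored permutation `σ = (π, f)`:
`inv_c(σ) = inv(π) + ∑ f(j) + c·#{(i,j) : i < j, π(i) < π(j), f(j) ≠ 0}`. -/
def invC (c : ℕ) {n : ℕ} (σ : Equiv.Perm (Fin n) × (Fin n → Fin c)) : ℕ :=
  invNum σ.1 + (∑ j, (σ.2 j : ℕ)) +
    c * ((Finset.univ : Finset (Fin n × Fin n)).filter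
      (fun p => p.1 < p.2 ∧ σ.1 p.1 < σ.1 p.2 ∧ (σ.2 p.2 : ℕ) ≠ 0)).card

/-- The colored Mahonian number `i_c(n,k)`: the number of colored permutations
of size `n` with exactly `k` colored inversions. -/
noncomputable def mahonianC (c n k : ℕ) : ℕ :=
  Nat.card {σ : Equiv.Perm (Fin n) × (Fin n → Fin c) // invC c σ = k}

/-- A colored involution: a colored permutation `σ = (π, f)` with `π ∘ π = id`
and `f(i) + f(π(i)) ≡ 0 (mod c)` for every `i`. -/
def IsColoredInvolution {c n : ℕ} (σ : Equiv.Perm (Fin n) × (Fin n → Fin c)) : Prop :=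
  σ.1 * σ.1 = 1 ∧ ∀ i, ((σ.2 i : ℕ) + (σ.2 (σ.1 i) : ℕ)) % c = 0

/-- `r_n^{(c)}`: the number of colored involutions of size `n`. -/
noncomputable def involutionCountC (c n : ℕ) : ℕ :=
  Nat.card {σ : Equiv.Perm (Fin n) × (Fin n → Fin c) // IsColoredInvolution σ}

/-- `i_n^{(c)}`: the total number of colored inversions over all colored
involutions of size `n`. -/
def totalInvCInvolution (c n : ℕ) : ℕ :=
  ∑ σ ∈ Finset.univ.filter
      (fun σ : Equiv.Perm (Fin n) × (Fin n → Fin c) =>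
        σ.1 * σ.1 = 1 ∧ ∀ i, ((σ.2 i : ℕ) + (σ.2 (σ.1 i) : ℕ)) % c = 0),
    invC c σ

/-! `inv_c` is a sum of contributions of single positions `j` (the color `f j`) and of pairs of
positions `i < j` (depending only on `π i`, `π j` and `f j`), so the total over all colored
involutions reduces to sums `∑_σ h (π j) (f j)` and `∑_σ g (π i) (f i) (π j) (f j)`. These are
evaluated by decomposing a colored involution along the cycle through `i`: either `i` is fixed, with
one of the colors `a` such that `2a = 0` (there are `1` or `2` of them, by the parity of `c`), or
`i` lies in a 2-cycle `(i k)` with colors `u, -u`; what remains is an arbitrary colored involution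
of the other positions. Doing this once or twice expresses everything through `r_{n-1}, …, r_{n-4}`
and counts of positions: a pair `i < j` cuts the other positions into three gaps, of sizes `i`,
`j - i - 1` and `n - 1 - j`, and each gap sums to `C(n,3)` over all pairs. -/

open Finset Function Equiv

section ColoredInvolutionsOn

variable {α : Type*} [Fintype α] [DecidableEq α] {c : ℕ} [NeZero c]

def fixedPointColors (c : ℕ) [NeZero c] : Finset (Fin c) := {a | a + a = 0}

@[simp] lemma mem_fixedPointColors {a : Fin c} : a ∈ fixedPointColors c ↔ a + a = 0 := by
  simp [fixedPointColors]

/-- Colored involutions of `s`, extended to `α` by fixed points of color `0`; staying inside `α`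
keeps the positions of the smaller involutions met in the recursion. -/
def coloredInvolutionsOn (c : ℕ) [NeZero c] (s : Finset α) : Finset (Perm α × (α → Fin c)) :=
  {σ | (∀ x, σ.1 (σ.1 x) = x) ∧ (∀ x, σ.2 x + σ.2 (σ.1 x) = 0) ∧ ∀ x ∉ s, σ.1 x = x ∧ σ.2 x = 0}

variable {s : Finset α} {σ : Perm α × (α → Fin c)} {i j k x : α}

@[simp] lemma mem_coloredInvolutionsOn :
    σ ∈ coloredInvolutionsOn c s ↔ (∀ x, σ.1 (σ.1 x) = x) ∧ (∀ x, σ.2 x + σ.2 (σ.1 x) = 0) ∧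
      ∀ x ∉ s, σ.1 x = x ∧ σ.2 x = 0 := by
  simp [coloredInvolutionsOn]

lemma apply_eq_self_of_mem_coloredInvolutionsOn (hσ : σ ∈ coloredInvolutionsOn c s) (hx : x ∉ s) :
    σ.1 x = x ∧ σ.2 x = 0 :=
  (mem_coloredInvolutionsOn.1 hσ).2.2 x hx

lemma apply_mem_of_mem_coloredInvolutionsOn (hσ : σ ∈ coloredInvolutionsOn c s) (hx : x ∈ s) :
    σ.1 x ∈ s := by
  by_contra h
  have hinv := (mem_coloredInvolutionsOn.1 hσ).1 x
  rw [(apply_eq_self_of_mem_coloredInvolutionsOn hσ h).1] at hinv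
  rw [hinv] at h
  exact h hx

lemma coloredInvolutionsOn_empty : coloredInvolutionsOn c (∅ : Finset α) = {(1, 0)} := by
  ext ⟨π, f⟩
  simp only [mem_coloredInvolutionsOn, notMem_empty, not_false_eq_true, forall_const,
    mem_singleton, Prod.mk.injEq, Perm.ext_iff, funext_iff, Perm.one_apply, Pi.zero_apply]
  constructor
  · exact fun h => ⟨fun x => (h.2.2 x).1, fun x => (h.2.2 x).2⟩
  · rintro ⟨hπ, hf⟩
    exact ⟨by simp [hπ], by simp [hf], fun x => ⟨hπ x, hf x⟩⟩

variable {M : Type*} [AddCommMonoid M]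

lemma sum_coloredInvolutionsOn_filter_apply_eq_self (hi : i ∈ s) (F : Perm α × (α → Fin c) → M) :
    ∑ σ ∈ coloredInvolutionsOn c s with σ.1 i = i, F σ =
      ∑ a ∈ fixedPointColors c, ∑ τ ∈ coloredInvolutionsOn c (s.erase i),
        F (τ.1, update τ.2 i a) := by
  rw [← sum_product']
  symm
  refine sum_nbij' (fun p => (p.2.1, update p.2.2 i p.1)) (fun σ => (σ.2 i, σ.1, update σ.2 i 0))
    ?_ ?_ ?_ ?_ fun _ _ => rfl
  · rintro ⟨a, τ⟩ h
    simp only [mem_product, mem_filter, mem_fixedPointColors, mem_coloredInvolutionsOn,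
      mem_erase] at h ⊢
    obtain ⟨ha, h1, h2, h3⟩ := h
    have hτi := h3 i (by simp)
    have hne : ∀ x, x ≠ i → τ.1 x ≠ i := fun x hx h => hx (τ.1.injective (h.trans hτi.1.symm))
    refine ⟨⟨h1, fun x => ?_, fun x hx => ?_⟩, hτi.1⟩ <;> grind [update_apply]
  · rintro ⟨π, f⟩ h
    simp only [mem_product, mem_filter, mem_fixedPointColors, mem_coloredInvolutionsOn,
      mem_erase] at h ⊢
    obtain ⟨⟨h1, h2, h3⟩, hπi⟩ := h
    refine ⟨by simpa [hπi] using h2 i, h1, fun x => ?_, fun x hx => ?_⟩ <;> grind [update_apply]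
  · rintro ⟨a, π, f⟩ h
    simp only [mem_product, mem_coloredInvolutionsOn, mem_erase] at h
    simp [← (h.2.2.2 i (by simp)).2]
  · rintro ⟨π, f⟩ -
    simp

lemma sum_coloredInvolutionsOn_filter_apply_eq (hi : i ∈ s) (hk : k ∈ s.erase i)
    (F : Perm α × (α → Fin c) → M) :
    ∑ σ ∈ coloredInvolutionsOn c s with σ.1 i = k, F σ =
      ∑ u : Fin c, ∑ τ ∈ coloredInvolutionsOn c ((s.erase i).erase k),
        F (swap i k * τ.1, update (update τ.2 i u) k (-u)) := by
  obtain ⟨hki, hks⟩ := mem_erase.1 hk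
  rw [← sum_product']
  symm
  refine sum_nbij' (fun p => (swap i k * p.2.1, update (update p.2.2 i p.1) k (-p.1)))
    (fun σ => (σ.2 i, swap i k * σ.1, update (update σ.2 i 0) k 0)) ?_ ?_ ?_ ?_ fun _ _ => rfl
  · rintro ⟨u, τ⟩ h
    simp only [mem_product, mem_filter, mem_univ, true_and, mem_coloredInvolutionsOn,
      mem_erase] at h ⊢
    obtain ⟨h1, h2, h3⟩ := h
    have hτi := h3 i (by simp)
    have hτk := h3 k (by simp)
    have hne : ∀ x, x ≠ i → x ≠ k → τ.1 x ≠ i ∧ τ.1 x ≠ k := fun x hxi hxk =>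
      ⟨fun h => hxi (τ.1.injective (h.trans hτi.1.symm)),
        fun h => hxk (τ.1.injective (h.trans hτk.1.symm))⟩
    refine ⟨⟨fun x => ?_, fun x => ?_, fun x hx => ?_⟩, by simp [hτi.1]⟩ <;>
      simp only [Perm.mul_apply] <;> grind [update_apply]
  · rintro ⟨π, f⟩ h
    simp only [mem_product, mem_filter, mem_univ, true_and, mem_coloredInvolutionsOn,
      mem_erase] at h ⊢
    obtain ⟨⟨h1, h2, h3⟩, hπi⟩ := h
    refine ⟨fun x => ?_, fun x => ?_, fun x hx => ?_⟩ <;>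
      simp only [Perm.mul_apply] <;> grind [update_apply]
  · rintro ⟨u, π, f⟩ h
    simp only [mem_product, mem_univ, true_and, mem_coloredInvolutionsOn, mem_erase] at h
    have hfi := (h.2.2 i (by simp)).2
    have hfk := (h.2.2 k (by simp)).2
    simp only [update_self, update_of_ne hki.symm, swap_mul_self_mul, Prod.mk.injEq, true_and]
    funext x
    grind [update_apply]
  · rintro ⟨π, f⟩ h
    simp only [mem_filter, mem_coloredInvolutionsOn] at h
    have hfk : f k = -f i := by rw [← h.2, eq_neg_iff_add_eq_zero, add_comm, h.1.2.1 i]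
    simp only [swap_mul_self_mul, Prod.mk.injEq, true_and]
    funext x
    grind [update_apply]

theorem sum_coloredInvolutionsOn_of_mem (hi : i ∈ s) (F : Perm α × (α → Fin c) → M) :
    ∑ σ ∈ coloredInvolutionsOn c s, F σ =
      ∑ a ∈ fixedPointColors c, ∑ τ ∈ coloredInvolutionsOn c (s.erase i),
          F (τ.1, update τ.2 i a) +
        ∑ k ∈ s.erase i, ∑ u : Fin c, ∑ τ ∈ coloredInvolutionsOn c ((s.erase i).erase k),
          F (swap i k * τ.1, update (update τ.2 i u) k (-u)) := by
  rw [← sum_fiberwise_of_maps_to fun σ hσ => apply_mem_of_mem_coloredInvolutionsOn hσ hi,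
    ← add_sum_erase s _ hi, sum_coloredInvolutionsOn_filter_apply_eq_self hi]
  exact congrArg _ (sum_congr rfl fun k hk => sum_coloredInvolutionsOn_filter_apply_eq hi hk F)

lemma card_coloredInvolutionsOn_of_mem (hi : i ∈ s) :
    #(coloredInvolutionsOn c s) = #(fixedPointColors c) * #(coloredInvolutionsOn c (s.erase i)) +
      ∑ k ∈ s.erase i, c * #(coloredInvolutionsOn c ((s.erase i).erase k)) := by
  rw [card_eq_sum_ones, sum_coloredInvolutionsOn_of_mem hi]
  simp

theorem card_coloredInvolutionsOn_congr {β : Type*} [Fintype β] [DecidableEq β] {t : Finset β}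
    (h : #s = #t) : #(coloredInvolutionsOn c s) = #(coloredInvolutionsOn c t) := by
  induction hm : #s using Nat.strong_induction_on generalizing s t with
  | _ m ih =>
  rcases s.eq_empty_or_nonempty with rfl | ⟨i, hi⟩
  · rw [card_empty, eq_comm, card_eq_zero] at h
    subst h
    simp [coloredInvolutionsOn_empty]
  obtain ⟨j, hj⟩ : t.Nonempty := by rw [← card_pos, ← h]; exact card_pos.2 ⟨i, hi⟩
  have hs : #(s.erase i) = m - 1 := by rw [card_erase_of_mem hi, hm]
  have ht : #(t.erase j) = m - 1 := by rw [card_erase_of_mem hj, ← h, hm]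
  have hm' : 0 < m := hm ▸ card_pos.2 ⟨i, hi⟩
  rw [card_coloredInvolutionsOn_of_mem hi, card_coloredInvolutionsOn_of_mem hj,
    ih (m - 1) (by omega) (hs.trans ht.symm) hs]
  congr 1
  rcases (t.erase j).eq_empty_or_nonempty with he | ⟨l, hl⟩
  · rw [he, card_empty] at ht
    simp [he, card_eq_zero.1 (hs.trans ht.symm)]
  obtain ⟨k, hk⟩ : (s.erase i).Nonempty := by rw [← card_pos, hs, ← ht]; exact card_pos.2 ⟨l, hl⟩
  have key : ∀ k ∈ s.erase i, ∀ l ∈ t.erase j, #(coloredInvolutionsOn c ((s.erase i).erase k)) =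
      #(coloredInvolutionsOn c ((t.erase j).erase l)) := fun k hk l hl => by
    refine ih (m - 2) (by omega) ?_ ?_ <;>
      simp only [card_erase_of_mem hk, card_erase_of_mem hl, hs, ht, Nat.sub_sub]
  rw [sum_congr rfl fun k' hk' => congrArg (c * ·) (key k' hk' l hl),
    sum_congr rfl fun l' hl' => congrArg (c * ·) ((key k hk l' hl').symm.trans (key k hk l hl)),
    sum_const, sum_const, hs, ht]

lemma isColoredInvolution_iff_mem {m : ℕ} (σ : Perm (Fin m) × (Fin m → Fin c)) :
    IsColoredInvolution σ ↔ σ ∈ coloredInvolutionsOn c univ := by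
  simp only [IsColoredInvolution, mem_coloredInvolutionsOn, mem_univ, not_true_eq_false,
    IsEmpty.forall_iff, implies_true, and_true, Perm.ext_iff, Perm.mul_apply, Perm.one_apply,
    Fin.ext_iff, Fin.val_add, Fin.val_zero]

theorem card_coloredInvolutionsOn (s : Finset α) :
    #(coloredInvolutionsOn c s) = involutionCountC c #s := by
  rw [involutionCountC, Nat.card_congr (Equiv.subtypeEquivRight isColoredInvolution_iff_mem),
    Nat.card_eq_finsetCard]
  exact card_coloredInvolutionsOn_congr (by simp)

theorem sum_coloredInvolutionsOn_apply (hj : j ∈ s) (h : α → Fin c → M) :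
    ∑ σ ∈ coloredInvolutionsOn c s, h (σ.1 j) (σ.2 j) =
      involutionCountC c (#s - 1) • ∑ a ∈ fixedPointColors c, h j a +
        involutionCountC c (#s - 2) • ∑ k ∈ s.erase j, ∑ u : Fin c, h k u := by
  rw [sum_coloredInvolutionsOn_of_mem hj, smul_sum, smul_sum]
  congr 1
  · refine sum_congr rfl fun a _ => ?_
    rw [← card_erase_of_mem hj, ← card_coloredInvolutionsOn, ← sum_const]
    refine sum_congr rfl fun τ hτ => ?_
    simp [(apply_eq_self_of_mem_coloredInvolutionsOn hτ (notMem_erase j s)).1]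
  · refine sum_congr rfl fun k hk => ?_
    rw [smul_sum]
    refine sum_congr rfl fun u _ => ?_
    have hkj := (mem_erase.1 hk).1
    rw [show #s - 2 = #((s.erase j).erase k) by
        rw [card_erase_of_mem hk, card_erase_of_mem hj]; rfl,
      ← card_coloredInvolutionsOn, ← sum_const]
    refine sum_congr rfl fun τ hτ => ?_
    simp [(apply_eq_self_of_mem_coloredInvolutionsOn (x := j) hτ (by simp)).1, hkj.symm]

lemma sum_coloredInvolutionsOn_swap_apply_apply (hi : i ∈ s) (hj : j ∈ s) (hij : i ≠ j)
    (hk : k ∈ (s.erase i).erase j) (u : Fin c) (g : α → Fin c → α → Fin c → M) :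
    ∑ τ ∈ coloredInvolutionsOn c ((s.erase i).erase k),
      g ((swap i k * τ.1) i) (update (update τ.2 i u) k (-u) i)
        ((swap i k * τ.1) j) (update (update τ.2 i u) k (-u) j) =
      involutionCountC c (#s - 3) • ∑ b ∈ fixedPointColors c, g k u j b +
        involutionCountC c (#s - 4) • ∑ l ∈ ((s.erase i).erase j).erase k, ∑ v : Fin c,
          g k u l v := by
  obtain ⟨hkj, hki, hks⟩ : k ≠ j ∧ k ≠ i ∧ k ∈ s := by simpa using hk
  have hjt : j ∈ (s.erase i).erase k := by simp [hkj.symm, hij.symm, hj]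
  have e : ∀ τ ∈ coloredInvolutionsOn c ((s.erase i).erase k),
      g ((swap i k * τ.1) i) (update (update τ.2 i u) k (-u) i)
        ((swap i k * τ.1) j) (update (update τ.2 i u) k (-u) j) = g k u (τ.1 j) (τ.2 j) := by
    intro τ hτ
    have hτi := (apply_eq_self_of_mem_coloredInvolutionsOn (x := i) hτ (by simp)).1
    obtain ⟨hτjk, hτji, -⟩ : τ.1 j ≠ k ∧ τ.1 j ≠ i ∧ τ.1 j ∈ s := by
      simpa using apply_mem_of_mem_coloredInvolutionsOn hτ hjt
    simp [hτi, hki.symm, hkj.symm, hij.symm, swap_apply_of_ne_of_ne hτji hτjk]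
  rw [sum_congr rfl e, sum_coloredInvolutionsOn_apply hjt, erase_right_comm (a := k),
    card_erase_of_mem (mem_erase.2 ⟨hki, hks⟩), card_erase_of_mem hi]
  rfl

theorem sum_coloredInvolutionsOn_apply_apply (hi : i ∈ s) (hj : j ∈ s) (hij : i ≠ j)
    (g : α → Fin c → α → Fin c → M) :
    ∑ σ ∈ coloredInvolutionsOn c s, g (σ.1 i) (σ.2 i) (σ.1 j) (σ.2 j) =
      involutionCountC c (#s - 2) • (∑ a ∈ fixedPointColors c,
          ∑ b ∈ fixedPointColors c, g i a j b + ∑ u : Fin c, g j u i (-u)) +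
        involutionCountC c (#s - 3) • (∑ a ∈ fixedPointColors c,
          ∑ l ∈ (s.erase i).erase j, ∑ v : Fin c, g i a l v +
            ∑ k ∈ (s.erase i).erase j, ∑ u : Fin c, ∑ b ∈ fixedPointColors c, g k u j b) +
        involutionCountC c (#s - 4) • ∑ k ∈ (s.erase i).erase j, ∑ u : Fin c,
          ∑ l ∈ ((s.erase i).erase j).erase k, ∑ v : Fin c, g k u l v := by
  have hj' : j ∈ s.erase i := mem_erase.2 ⟨hij.symm, hj⟩
  have hfixed : ∀ a : Fin c, ∑ τ ∈ coloredInvolutionsOn c (s.erase i),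
      g (τ.1 i) (update τ.2 i a i) (τ.1 j) (update τ.2 i a j) =
        involutionCountC c (#s - 2) • ∑ b ∈ fixedPointColors c, g i a j b +
          involutionCountC c (#s - 3) • ∑ l ∈ (s.erase i).erase j, ∑ v : Fin c, g i a l v := by
    intro a
    have e : ∀ τ ∈ coloredInvolutionsOn c (s.erase i),
        g (τ.1 i) (update τ.2 i a i) (τ.1 j) (update τ.2 i a j) = g i a (τ.1 j) (τ.2 j) :=
      fun τ hτ => by
        simp [(apply_eq_self_of_mem_coloredInvolutionsOn (x := i) hτ (by simp)).1, hij.symm]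
    rw [sum_congr rfl e, sum_coloredInvolutionsOn_apply hj', card_erase_of_mem hi]
    rfl
  have hswap_self : ∀ u : Fin c, ∑ τ ∈ coloredInvolutionsOn c ((s.erase i).erase j),
      g ((swap i j * τ.1) i) (update (update τ.2 i u) j (-u) i)
        ((swap i j * τ.1) j) (update (update τ.2 i u) j (-u) j) =
        involutionCountC c (#s - 2) • g j u i (-u) := by
    intro u
    have e : #s - 2 = #((s.erase i).erase j) := by
      rw [card_erase_of_mem hj', card_erase_of_mem hi]; rfl
    rw [e, ← card_coloredInvolutionsOn, ← sum_const]
    refine sum_congr rfl fun τ hτ => ?_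
    have hτi := (apply_eq_self_of_mem_coloredInvolutionsOn (x := i) hτ (by simp)).1
    have hτj := (apply_eq_self_of_mem_coloredInvolutionsOn (x := j) hτ (by simp)).1
    simp [hτi, hτj, hij]
  rw [sum_coloredInvolutionsOn_of_mem hi, ← add_sum_erase _ _ hj',
    sum_congr rfl fun a _ => hfixed a,
    sum_congr rfl fun u _ => hswap_self u,
    sum_congr rfl fun k hk => sum_congr rfl fun u _ =>
      sum_coloredInvolutionsOn_swap_apply_apply hi hj hij hk u g]
  simp only [sum_add_distrib, smul_add, smul_sum]
  abel

end ColoredInvolutionsOn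

lemma sum_range_choose_eq (n k : ℕ) : ∑ m ∈ range n, m.choose k = n.choose (k + 1) := by
  induction n with
  | zero => simp
  | succ n ih => rw [sum_range_succ, ih, Nat.choose_succ_succ', add_comm]

section Colors

variable {c : ℕ} [NeZero c]

lemma Fin.add_self_eq_zero_iff {a : Fin c} : a + a = 0 ↔ a = 0 ∨ 2 * (a : ℕ) = c := by
  have := a.isLt
  rw [Fin.ext_iff, Fin.ext_iff, Fin.val_add, Fin.val_zero]
  rcases lt_or_ge ((a : ℕ) + a) c with h | h
  · rw [Nat.mod_eq_of_lt h]; omega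
  · rw [Nat.mod_eq_sub_mod h, Nat.mod_eq_of_lt (by omega)]; omega

lemma fixedPointColors_of_even {d : ℕ} (hd : c = d + d) :
    fixedPointColors c = {0, ⟨d, by have := NeZero.pos c; omega⟩} := by
  ext a
  simp only [mem_fixedPointColors, mem_insert, mem_singleton, Fin.add_self_eq_zero_iff]
  simp only [Fin.ext_iff, Fin.val_zero]
  omega

lemma fixedPointColors_of_odd (h : Odd c) : fixedPointColors c = {0} := by
  obtain ⟨d, rfl⟩ := h
  ext a
  simp only [mem_fixedPointColors, mem_singleton, Fin.add_self_eq_zero_iff]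
  simp only [Fin.ext_iff, Fin.val_zero]
  omega

lemma card_fixedPointColors : (#(fixedPointColors c) : ℚ) = (3 + (-1) ^ c) / 2 := by
  rcases Nat.even_or_odd c with ⟨d, hd⟩ | h
  · have hne : (0 : Fin c) ≠ ⟨d, by have := NeZero.pos c; omega⟩ := by
      have := NeZero.pos c; simp [Fin.ext_iff]; omega
    rw [fixedPointColors_of_even hd, card_pair hne, Even.neg_one_pow ⟨d, hd⟩]
    norm_num
  · rw [fixedPointColors_of_odd h, card_singleton, h.neg_one_pow]
    norm_num

lemma sum_val_fixedPointColors :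
    ∑ a ∈ fixedPointColors c, ((a : ℕ) : ℚ) = c * (1 + (-1) ^ c) / 4 := by
  rcases Nat.even_or_odd c with ⟨d, hd⟩ | h
  · have hne : (0 : Fin c) ≠ ⟨d, by have := NeZero.pos c; omega⟩ := by
      have := NeZero.pos c; simp [Fin.ext_iff]; omega
    rw [fixedPointColors_of_even hd, sum_pair hne, Even.neg_one_pow ⟨d, hd⟩]
    simp only [Fin.val_zero, Nat.cast_zero, zero_add]
    rw [hd]
    push_cast
    ring
  · rw [fixedPointColors_of_odd h, sum_singleton, h.neg_one_pow]
    simp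

omit [NeZero c] in
lemma sum_val_fin_eq_choose_two : ∑ a : Fin c, ((a : ℕ) : ℚ) = c.choose 2 := by
  rw [Fin.sum_univ_eq_sum_range (fun a => (a : ℚ)), ← sum_range_choose_eq c 1]
  simp

lemma card_univ_erase_zero : (#(univ.erase (0 : Fin c)) : ℚ) = c - 1 := by
  rw [card_erase_of_mem (mem_univ _), card_univ, Fintype.card_fin, Nat.cast_sub NeZero.one_le,
    Nat.cast_one]

lemma card_fixedPointColors_erase_zero :
    (#((fixedPointColors c).erase 0) : ℚ) = #(fixedPointColors c) - 1 := by
  rw [card_erase_of_mem (by simp), Nat.cast_sub (card_pos.2 ⟨0, by simp⟩), Nat.cast_one]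

end Colors

section Positions

variable {n : ℕ}

lemma choose_two_mul_choose_two_sub_two (n : ℕ) :
    n.choose 2 * (n - 2).choose 2 = 6 * n.choose 4 := by
  rw [← Nat.choose_mul (by norm_num : 2 ≤ 4), mul_comm]
  rfl

lemma sum_ite_lt (m : Fin n) (x : ℚ) : ∑ l : Fin n, (if l < m then x else 0) = m * x := by
  rw [← sum_filter, filter_gt_eq_Iio, sum_const, Fin.card_Iio, nsmul_eq_mul]

lemma sum_ite_gt (m : Fin n) (x : ℚ) :
    ∑ l : Fin n, (if m < l then x else 0) = (n - 1 - m : ℕ) * x := by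
  rw [← sum_filter, filter_lt_eq_Ioi, sum_const, Fin.card_Ioi, nsmul_eq_mul]

lemma sum_erase_erase_eq_sub {i j : Fin n} (hij : i ≠ j) (f : Fin n → ℚ) :
    ∑ l ∈ (univ.erase i).erase j, f l = ∑ l, f l - f i - f j := by
  rw [sum_erase_eq_sub (mem_erase.2 ⟨hij.symm, mem_univ j⟩), sum_erase_eq_sub (mem_univ i)]

lemma sum_sum_ite_lt {β : Type*} [LinearOrder β] (t : Finset β) (x : ℚ) :
    ∑ k ∈ t, ∑ l ∈ t, (if l < k then x else 0) = (#t).choose 2 * x := by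
  induction t using Finset.induction_on_max with
  | empty => simp
  | insert a t ha ih =>
    have hat : a ∉ t := fun h => lt_irrefl a (ha a h)
    have hlt : ∑ l ∈ t, (if l < a then x else 0) = #t * x := by
      rw [sum_congr rfl fun l hl => if_pos (ha l hl), sum_const, nsmul_eq_mul]
    have hgt : ∀ k ∈ t, ∑ l ∈ insert a t, (if l < k then x else 0) =
        ∑ l ∈ t, (if l < k then x else 0) := fun k hk => by
      rw [sum_insert hat, if_neg (ha k hk).not_gt, zero_add]
    rw [sum_insert hat, sum_congr rfl hgt, ih, sum_insert hat, if_neg (lt_irrefl a), zero_add, hlt,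
      card_insert_of_notMem hat, Nat.choose_succ_succ', Nat.choose_one_right]
    push_cast
    ring

lemma sum_sum_erase_ite_lt_add_ite_gt {β : Type*} [LinearOrder β] (t : Finset β) (x y : ℚ) :
    ∑ k ∈ t, ∑ l ∈ t.erase k, ((if l < k then x else 0) + if k < l then y else 0) =
      (#t).choose 2 * (x + y) := by
  have h : ∀ k ∈ t, ∑ l ∈ t.erase k, ((if l < k then x else 0) + if k < l then y else 0) =
      ∑ l ∈ t, ((if l < k then x else 0) + if k < l then y else 0) := fun k _ =>
    sum_erase _ (by simp)
  rw [sum_congr rfl h]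
  simp only [sum_add_distrib]
  rw [sum_comm (f := fun k l => if k < l then y else 0), sum_sum_ite_lt, sum_sum_ite_lt]
  ring

lemma sum_lt_pairs_eq_sum_range {M : Type*} [AddCommMonoid M] (f : ℕ → ℕ → M) :
    ∑ p ∈ ({p | p.1 < p.2} : Finset (Fin n × Fin n)), f p.1 p.2 =
      ∑ j ∈ range n, ∑ i ∈ range j, f i j := by
  rw [sum_filter, Fintype.sum_prod_type, sum_comm]
  simp only [Fin.lt_def]
  rw [Fin.sum_univ_eq_sum_range (fun j => ∑ i : Fin n, if (i : ℕ) < j then f i j else 0)]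
  refine sum_congr rfl fun j hj => ?_
  rw [Fin.sum_univ_eq_sum_range (fun i => if i < j then f i j else 0), ← sum_filter]
  congr 1
  ext i
  simp only [mem_filter, mem_range] at hj ⊢
  omega

lemma card_lt_pairs : #({p | p.1 < p.2} : Finset (Fin n × Fin n)) = n.choose 2 := by
  rw [card_eq_sum_ones, sum_lt_pairs_eq_sum_range (fun _ _ => 1)]
  simpa using sum_range_choose_eq n 1

lemma sum_lt_pairs_fst :
    ∑ p ∈ ({p | p.1 < p.2} : Finset (Fin n × Fin n)), (p.1 : ℕ) = n.choose 3 := by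
  rw [sum_lt_pairs_eq_sum_range (fun i _ => i), ← sum_range_choose_eq n 2]
  exact sum_congr rfl fun j _ => by simpa using sum_range_choose_eq j 1

lemma sum_lt_pairs_snd_sub_fst :
    ∑ p ∈ ({p | p.1 < p.2} : Finset (Fin n × Fin n)), ((p.2 : ℕ) - p.1 - 1) = n.choose 3 := by
  rw [← sum_lt_pairs_fst, sum_lt_pairs_eq_sum_range (fun i j => j - i - 1),
    sum_lt_pairs_eq_sum_range (fun i _ => i)]
  refine sum_congr rfl fun j _ => ?_
  rw [← sum_range_reflect]
  exact sum_congr rfl fun i hi => by rw [mem_range] at hi; omega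

lemma sum_lt_pairs_sub_snd :
    ∑ p ∈ ({p | p.1 < p.2} : Finset (Fin n × Fin n)), (n - 1 - p.2 : ℕ) = n.choose 3 := by
  rw [← sum_lt_pairs_fst]
  refine sum_nbij' (fun p => (p.2.rev, p.1.rev)) (fun p => (p.2.rev, p.1.rev)) ?_ ?_ ?_ ?_ ?_ <;>
    simp [Fin.rev_lt_rev]
  omega

lemma sum_lt_pairs_gaps (x y z : ℚ) : ∑ p ∈ ({p | p.1 < p.2} : Finset (Fin n × Fin n)),
    (x * (p.1 : ℕ) + y * ((p.2 : ℕ) - p.1 - 1 : ℕ) + z * (n - 1 - p.2 : ℕ)) =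
      (x + y + z) * n.choose 3 := by
  simp only [sum_add_distrib, ← mul_sum]
  rw_mod_cast [sum_lt_pairs_fst, sum_lt_pairs_snd_sub_fst, sum_lt_pairs_sub_snd]
  ring

end Positions

section Statistic

variable {c n : ℕ} [NeZero c]

def pairWeight (c : ℕ) [NeZero c] {n : ℕ} (k l : Fin n) (v : Fin c) : ℚ :=
  (if l < k then 1 else 0) + if k < l ∧ v ≠ 0 then (c : ℚ) else 0

lemma invC_eq_sum_pairWeight (σ : Perm (Fin n) × (Fin n → Fin c)) :
    (invC c σ : ℚ) = ∑ p ∈ ({p | p.1 < p.2} : Finset (Fin n × Fin n)),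
        pairWeight c (σ.1 p.1) (σ.1 p.2) (σ.2 p.2) + ∑ j, ((σ.2 j : ℕ) : ℚ) := by
  simp only [invC, invNum, pairWeight, sum_add_distrib, Nat.cast_add, Nat.cast_mul, Nat.cast_sum,
    ← sum_boole, sum_filter, Fin.val_ne_zero_iff]
  rw [mul_sum]
  simp only [ite_and, mul_ite, mul_one, mul_zero]
  ring

lemma sum_pairWeight (k l : Fin n) (X : Finset (Fin c)) :
    ∑ v ∈ X, pairWeight c k l v =
      (if l < k then (#X : ℚ) else 0) + if k < l then (c : ℚ) * #(X.erase 0) else 0 := by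
  simp only [pairWeight, sum_add_distrib]
  by_cases h : k < l
  · simp only [h, h.not_gt, true_and, if_false, sum_const_zero, zero_add, if_true, ← sum_filter,
      filter_ne', sum_const, nsmul_eq_mul, mul_comm]
  · simp [h]

variable {i j : Fin n}

lemma sum_pairWeight_inside (hij : i < j) :
    ∑ _a ∈ fixedPointColors c, ∑ b ∈ fixedPointColors c, pairWeight c i j b +
      ∑ u : Fin c, pairWeight c j i (-u) =
      c * (#(fixedPointColors c) * (#(fixedPointColors c) - 1) + 1) := by
  simp only [sum_pairWeight, hij, hij.not_gt, if_true, if_false, zero_add,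
    card_fixedPointColors_erase_zero, sum_const, nsmul_eq_mul]
  simp [pairWeight, hij, hij.not_gt]
  ring

lemma sum_pairWeight_one_outside (hij : i < j) :
    ∑ _a ∈ fixedPointColors c, ∑ l ∈ (univ.erase i).erase j, ∑ v : Fin c, pairWeight c i l v +
      ∑ k ∈ (univ.erase i).erase j, ∑ _u : Fin c, ∑ b ∈ fixedPointColors c, pairWeight c k j b =
      c * ((#(fixedPointColors c) + c * (#(fixedPointColors c) - 1)) * i +
        (#(fixedPointColors c) * (c - 1) + c * (#(fixedPointColors c) - 1)) * (j - i - 1 : ℕ) +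
          #(fixedPointColors c) * c * (n - 1 - j : ℕ)) := by
  simp only [sum_pairWeight, card_univ, Fintype.card_fin, card_univ_erase_zero,
    card_fixedPointColors_erase_zero, sum_const, nsmul_eq_mul, sum_erase_erase_eq_sub hij.ne,
    sum_add_distrib, sum_ite_lt, sum_ite_gt, ← mul_sum]
  have hij' : (i : ℕ) < j := hij
  have hi : ((n - 1 - i : ℕ) : ℚ) = (j - i - 1 : ℕ) + (n - 1 - j : ℕ) + 1 := by
    have := j.isLt; norm_cast; omega
  have hj : (j : ℚ) = i + (j - i - 1 : ℕ) + 1 := by norm_cast; omega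
  simp only [hij, hij.not_gt, lt_irrefl, if_true, if_false, hi, hj]
  ring

lemma sum_pairWeight_two_outside (hij : i < j) :
    ∑ k ∈ (univ.erase i).erase j, ∑ _u : Fin c,
      ∑ l ∈ ((univ.erase i).erase j).erase k, ∑ v : Fin c, pairWeight c k l v =
      c ^ 3 * (n - 2).choose 2 := by
  have ht : #((univ.erase i).erase j) = n - 2 := by
    rw [card_erase_of_mem (mem_erase.2 ⟨hij.ne', mem_univ j⟩), card_erase_of_mem (mem_univ i),
      card_univ, Fintype.card_fin]; rfl
  simp only [sum_pairWeight, card_univ, Fintype.card_fin, card_univ_erase_zero, sum_const,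
    nsmul_eq_mul]
  rw [← mul_sum, sum_sum_erase_ite_lt_add_ite_gt, ht]
  ring

theorem sum_coloredInvolutionsOn_pairWeight (hij : i < j) :
    ∑ σ ∈ coloredInvolutionsOn c univ, pairWeight c (σ.1 i) (σ.1 j) (σ.2 j) =
      involutionCountC c (n - 2) *
          (c * (#(fixedPointColors c) * (#(fixedPointColors c) - 1) + 1)) +
        involutionCountC c (n - 3) *
          (c * ((#(fixedPointColors c) + c * (#(fixedPointColors c) - 1)) * i +
            (#(fixedPointColors c) * (c - 1) + c * (#(fixedPointColors c) - 1)) * (j - i - 1 : ℕ) +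
              #(fixedPointColors c) * c * (n - 1 - j : ℕ))) +
        involutionCountC c (n - 4) * (c ^ 3 * (n - 2).choose 2) := by
  have key := sum_coloredInvolutionsOn_apply_apply (c := c) (mem_univ i) (mem_univ j) hij.ne
    (fun k _ l v => pairWeight c k l v)
  simp only [card_univ, Fintype.card_fin] at key
  rw [key, sum_pairWeight_inside hij, sum_pairWeight_one_outside hij,
    sum_pairWeight_two_outside hij]
  simp only [nsmul_eq_mul]

lemma sum_coloredInvolutionsOn_sum_val :
    ∑ σ ∈ coloredInvolutionsOn c (univ : Finset (Fin n)), ∑ j, ((σ.2 j : ℕ) : ℚ) =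
      n * involutionCountC c (n - 1) * ∑ a ∈ fixedPointColors c, ((a : ℕ) : ℚ) +
        2 * n.choose 2 * involutionCountC c (n - 2) * c.choose 2 := by
  have hpairs : (n : ℚ) * (n - 1 : ℕ) = 2 * n.choose 2 := by
    rcases n with _ | n
    · simp
    · rw [Nat.cast_choose_two]; push_cast; ring
  rw [sum_comm]
  simp only [sum_coloredInvolutionsOn_apply (mem_univ _) (fun _ u => ((u : ℕ) : ℚ)), card_univ,
    Fintype.card_fin, sum_const, nsmul_eq_mul, card_erase_of_mem (mem_univ _),
    sum_val_fin_eq_choose_two]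
  linear_combination involutionCountC c (n - 2) * (c.choose 2 : ℚ) * hpairs

lemma totalInvCInvolution_eq_sum :
    (totalInvCInvolution c n : ℚ) = ∑ p ∈ ({p | p.1 < p.2} : Finset (Fin n × Fin n)),
        ∑ σ ∈ coloredInvolutionsOn c univ, pairWeight c (σ.1 p.1) (σ.1 p.2) (σ.2 p.2) +
      ∑ σ ∈ coloredInvolutionsOn c (univ : Finset (Fin n)), ∑ j, ((σ.2 j : ℕ) : ℚ) := by
  have hfilter : ({σ | σ.1 * σ.1 = 1 ∧ ∀ i, ((σ.2 i : ℕ) + (σ.2 (σ.1 i) : ℕ)) % c = 0} :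
      Finset (Perm (Fin n) × (Fin n → Fin c))) = coloredInvolutionsOn c univ := by
    ext σ
    rw [mem_filter, ← isColoredInvolution_iff_mem]
    simp [IsColoredInvolution]
  rw [totalInvCInvolution, hfilter, Nat.cast_sum]
  simp only [invC_eq_sum_pairWeight, sum_add_distrib]
  rw [sum_comm]

end Statistic

theorem totalInvCInvolution_formula_general (c n : ℕ) (hc : 1 ≤ c) :
    (totalInvCInvolution c n : ℚ) =
      (n : ℚ) * (c : ℚ) * ((-1 : ℚ) ^ c + 1) / 4 * (involutionCountC c (n - 1) : ℚ) +
      (c : ℚ) * ((c : ℚ) + 1 + (-1 : ℚ) ^ c) * (n.choose 2 : ℚ) *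
        (involutionCountC c (n - 2) : ℚ) +
      2 * (c : ℚ) ^ 2 * ((-1 : ℚ) ^ c + 2) * (n.choose 3 : ℚ) *
        (involutionCountC c (n - 3) : ℚ) +
      6 * (c : ℚ) ^ 3 * (n.choose 4 : ℚ) * (involutionCountC c (n - 4) : ℚ) := by
  have : NeZero c := ⟨by omega⟩
  have hquads : (n.choose 2 : ℚ) * (n - 2).choose 2 = 6 * n.choose 4 := by
    exact_mod_cast choose_two_mul_choose_two_sub_two n
  rw [totalInvCInvolution_eq_sum,
    sum_congr rfl fun p hp => sum_coloredInvolutionsOn_pairWeight (mem_filter.1 hp).2,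
    sum_coloredInvolutionsOn_sum_val, sum_add_distrib, sum_add_distrib, sum_const, sum_const,
    ← mul_sum, ← mul_sum, sum_lt_pairs_gaps, card_lt_pairs, card_fixedPointColors,
    sum_val_fixedPointColors, Nat.cast_choose_two ℚ c]
  -- `#(fixedPointColors c)` enters quadratically, so `((-1) ^ c) ^ 2 = 1` is needed
  rcases neg_one_pow_eq_or ℚ c with hs | hs <;> rw [hs] <;>
    linear_combination (involutionCountC c (n - 4) * (c : ℚ) ^ 3) * hquads

/-- Explicit formula for `i_n^{(c)}`, as an equality of rational numbers. -/
theorem totalInvCInvolution_formula (c n : ℕ) (hc : 1 ≤ c) (hn : 4 ≤ n) :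
    (totalInvCInvolution c n : ℚ) =
      (n : ℚ) * (c : ℚ) * ((-1 : ℚ) ^ c + 1) / 4 * (involutionCountC c (n - 1) : ℚ) +
      (c : ℚ) * ((c : ℚ) + 1 + (-1 : ℚ) ^ c) * (n.choose 2 : ℚ) *
        (involutionCountC c (n - 2) : ℚ) +
      2 * (c : ℚ) ^ 2 * ((-1 : ℚ) ^ c + 2) * (n.choose 3 : ℚ) *
        (involutionCountC c (n - 3) : ℚ) +
      6 * (c : ℚ) ^ 3 * (n.choose 4 : ℚ) * (involutionCountC c (n - 4) : ℚ) :=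
  totalInvCInvolution_formula_general c n hc
end

section
/- For all integers c ≥ 1, n ≥ 0, and k ≥ 0, the statistics inv_c and the modified statistic σ ↦ c·inv(π) + ∑_{j=1}^n f(j) are equidistributed on colored permutations of size n: the number of colored permutations σ = (π, f) of size n with inv_c(σ) = k equals the number of colored permutations σ = (π, f) of size n with c·inv(π) + ∑_{j=1}^n f(j) = k. -/
/-!
Both statistics are sums over positions `j` of a weight depending only on the Lehmer code entry
`b = #{i < j | π i > π j} ∈ [0, j]` and the color `t = f j ∈ [0, c)`: the weight is `c * b + t`
for `c * inv π + ∑ f`, and `b + t + c * (j - b) * [t ≠ 0]` for `inv_c`, since `j - b` counts the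
`i < j` with `π i < π j`. Both weights are injective maps `[0, j] × [0, c) → [0, (j + 1) c)` and
the Lehmer code is injective, so each statistic is `y ↦ ∑ j, y j` pulled back along an injection
between the equinumerous sets of colored permutations and `∏ j, [0, (j + 1) c)`.
-/

open Finset

open Function

theorem Finset.card_filter_univ_prod {α β : Type*} [Fintype α] [Fintype β]
    (P : α × β → Prop) [DecidablePred P] :
    #{p | P p} = ∑ b, #{a | P (a, b)} := by
  rw [card_filter, Fintype.sum_prod_type, sum_comm]
  simp only [card_filter]

theorem Nat.eq_and_eq_of_add_mul_eq {c b b' t t' : ℕ} (ht : t < c) (ht' : t' < c)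
    (h : t + c * b = t' + c * b') : t = t' ∧ b = b' := by
  have hc := Nat.zero_lt_of_lt ht
  obtain ⟨hb, ht⟩ := (Nat.div_mod_unique hc).mpr ⟨h, ht⟩
  obtain ⟨hb', ht'⟩ := (Nat.div_mod_unique hc).mpr ⟨rfl, ht'⟩
  exact ⟨ht.symm.trans ht', hb.symm.trans hb'⟩

theorem Nat.card_subtype_comp_eq_of_injective {X Y : Type*} [Finite Y] {g : X → Y}
    (hg : Injective g) (hcard : Nat.card X = Nat.card Y) (p : Y → Prop) :
    Nat.card {x // p (g x)} = Nat.card {y // p y} :=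
  Nat.card_congr ((Equiv.ofBijective g (hg.bijective_of_nat_card_le hcard.ge)).subtypeEquiv
    fun _ => Iff.rfl)

namespace Equiv.Perm

variable {n : ℕ}

def lehmerCode (π : Perm (Fin n)) (j : Fin n) : ℕ := #{i | i < j ∧ π j < π i}

theorem invNum_eq_sum_lehmerCode (π : Perm (Fin n)) : invNum π = ∑ j, lehmerCode π j :=
  card_filter_univ_prod _

theorem lehmerCode_le (π : Perm (Fin n)) (j : Fin n) : lehmerCode π j ≤ j := by
  calc lehmerCode π j ≤ #{i | i < j} := card_le_card (monotone_filter_right _ fun _ _ h => h.1)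
    _ = j := by rw [filter_gt_eq_Iio, Fin.card_Iio]

theorem card_filter_lt_and_lt (π : Perm (Fin n)) (j : Fin n) :
    #{i | i < j ∧ π i < π j} = j - lehmerCode π j := by
  have hsplit := card_filter_add_card_filter_not (s := Iio j) (fun i => π i < π j)
  have hpos : {i ∈ Iio j | π i < π j} = ({i | i < j ∧ π i < π j} : Finset (Fin n)) := by
    ext; simp
  have hneg : {i ∈ Iio j | ¬π i < π j} = ({i | i < j ∧ π j < π i} : Finset (Fin n)) := by
    ext i
    simp only [mem_filter, mem_Iio, mem_univ, true_and, not_lt, and_congr_right_iff]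
    exact fun hij => (π.injective.ne hij.ne').le_iff_lt
  rw [hpos, hneg, Fin.card_Iio] at hsplit
  rw [lehmerCode]
  omega

theorem lehmerCode_eq_card_filter_image (π : Perm (Fin n)) (j : Fin n) :
    lehmerCode π j = #{v ∈ (Iic j).image π | π j < v} := by
  rw [filter_image, card_image_of_injective _ π.injective, lehmerCode]
  congr 1
  ext i
  simp only [mem_filter, mem_univ, true_and, mem_Iic]
  exact ⟨fun h => ⟨h.1.le, h.2⟩,
    fun h => ⟨h.1.lt_of_ne (by rintro rfl; exact lt_irrefl _ h.2), h.2⟩⟩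

theorem image_Iic_eq_of_eqOn_Ioi {π π' : Perm (Fin n)} {j : Fin n}
    (h : ∀ i, j < i → π i = π' i) : (Iic j).image π = (Iic j).image π' := by
  have hsymm : ∀ v, j < π.symm v ∨ j < π'.symm v → π.symm v = π'.symm v := by
    rintro v (hv | hv)
    · rw [eq_comm, symm_apply_eq, ← h _ hv, apply_symm_apply]
    · rw [symm_apply_eq, h _ hv, apply_symm_apply]
  ext v
  simp only [mem_image, mem_Iic, ← eq_symm_apply, exists_eq_right]
  by_cases hv : j < π.symm v ∨ j < π'.symm v
  · rw [hsymm v hv]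
  · push Not at hv
    exact iff_of_true hv.1 hv.2

theorem card_filter_lt_lt_of_lt {S : Finset (Fin n)} {a b : Fin n} (hab : a < b) (hb : b ∈ S) :
    #{v ∈ S | b < v} < #{v ∈ S | a < v} := by
  refine card_lt_card ⟨monotone_filter_right _ fun _ _ h => hab.trans h, fun hsub => ?_⟩
  simpa using hsub (mem_filter.mpr ⟨hb, hab⟩)

/-- Downward induction on `j`: once `π` and `π'` agree after `j`, they map `[0, j]` onto the
same set `S`, in which `lehmerCode π j` counts the elements above `π j`. -/
theorem lehmerCode_injective : Injective (lehmerCode : Perm (Fin n) → Fin n → ℕ) := by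
  intro π π' h
  ext j : 1
  induction j using WellFoundedGT.induction with
  | _ j ih =>
    have himage := image_Iic_eq_of_eqOn_Ioi ih
    have hj : lehmerCode π j = lehmerCode π' j := congrFun h j
    rw [lehmerCode_eq_card_filter_image, lehmerCode_eq_card_filter_image, himage] at hj
    have hmem : ∀ ρ : Perm (Fin n), ρ j ∈ (Iic j).image ρ := fun ρ => mem_image_of_mem ρ (by simp)
    rcases lt_trichotomy (π j) (π' j) with hlt | heq | hlt
    · exact absurd hj (card_filter_lt_lt_of_lt hlt (himage ▸ hmem π')).ne'
    · exact heq
    · exact absurd hj (card_filter_lt_lt_of_lt hlt (himage ▸ hmem π)).ne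

end Equiv.Perm

section ColoredPerm

open Equiv

variable {c n : ℕ}

def invCWeight (c m b t : ℕ) : ℕ := b + t + c * if t = 0 then 0 else m - b

theorem invCWeight_lt {m b t : ℕ} (hb : b ≤ m) (ht : t < c) :
    invCWeight c m b t < (m + 1) * c := by
  obtain ⟨d, rfl⟩ := Nat.exists_eq_add_of_le hb
  have hmul : b + d ≤ c * (b + d) := Nat.le_mul_of_pos_left _ (by omega)
  rw [invCWeight, Nat.add_sub_cancel_left]
  split_ifs <;> nlinarith

/-- For `t ≠ 0` the weight `invCWeight (c + 1) m b t` is `m + 1 + (t - 1) + c * (m - b)`,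
a base-`c` expansion; for `t = 0` it is `b ≤ m`. -/
theorem invCWeight_inj {m b b' t t' : ℕ} (hb : b ≤ m) (hb' : b' ≤ m) (ht : t < c) (ht' : t' < c)
    (h : invCWeight c m b t = invCWeight c m b' t') : b = b' ∧ t = t' := by
  obtain ⟨c, rfl⟩ : ∃ c', c = c' + 1 := ⟨c - 1, by omega⟩
  obtain ⟨d, hd⟩ : ∃ d, m - b = d := ⟨_, rfl⟩
  obtain ⟨d', hd'⟩ : ∃ d', m - b' = d' := ⟨_, rfl⟩
  rw [invCWeight, invCWeight, hd, hd', add_mul, add_mul, one_mul, one_mul] at h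
  have hle : ∀ x, x ≤ c * x + x := fun x => Nat.le_add_left x (c * x)
  split_ifs at h with h0 h0' h0'
  · omega
  · have := hle d'; omega
  · have := hle d; omega
  · have hflat : (t - 1) + c * d = (t' - 1) + c * d' := by omega
    have := Nat.eq_and_eq_of_add_mul_eq (by omega) (by omega) hflat
    omega

def invCEncode (c m : ℕ) (p : Fin (m + 1) × Fin c) : Fin ((m + 1) * c) :=
  ⟨invCWeight c m p.1 p.2, invCWeight_lt (Nat.le_of_lt_succ p.1.isLt) p.2.isLt⟩

theorem invCEncode_injective (c m : ℕ) : Injective (invCEncode c m) := by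
  intro p q h
  obtain ⟨h1, h2⟩ := invCWeight_inj (Nat.le_of_lt_succ p.1.isLt) (Nat.le_of_lt_succ q.1.isLt)
    p.2.isLt q.2.isLt (congrArg Fin.val h)
  exact Prod.ext (Fin.ext h1) (Fin.ext h2)

def coloredLehmerCode (σ : Perm (Fin n) × (Fin n → Fin c)) (j : Fin n) : Fin (j + 1) × Fin c :=
  (⟨σ.1.lehmerCode j, Nat.lt_succ_of_le (σ.1.lehmerCode_le j)⟩, σ.2 j)

theorem coloredLehmerCode_injective :
    Injective (coloredLehmerCode : Perm (Fin n) × (Fin n → Fin c) → _) := by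
  intro σ σ' h
  have hj j := Prod.ext_iff.mp (congrFun h j)
  refine Prod.ext (Perm.lehmerCode_injective (funext fun j => ?_)) (funext fun j => (hj j).2)
  exact congrArg Fin.val (hj j).1

theorem card_coloredPerm (c n : ℕ) :
    Nat.card (Perm (Fin n) × (Fin n → Fin c)) = Nat.card ((j : Fin n) → Fin ((j + 1) * c)) := by
  simp only [Nat.card_eq_fintype_card, Fintype.card_prod, Fintype.card_perm, Fintype.card_fun,
    Fintype.card_pi, Fintype.card_fin, prod_mul_distrib, prod_const, card_univ]
  rw [Fin.prod_univ_eq_prod_range (· + 1), prod_range_add_one_eq_factorial]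

theorem card_colored_ascents (σ : Perm (Fin n) × (Fin n → Fin c)) :
    #{p : Fin n × Fin n | p.1 < p.2 ∧ σ.1 p.1 < σ.1 p.2 ∧ (σ.2 p.2 : ℕ) ≠ 0} =
      ∑ j, if (σ.2 j : ℕ) = 0 then 0 else j - σ.1.lehmerCode j := by
  rw [card_filter_univ_prod]
  refine sum_congr rfl fun j _ => ?_
  split_ifs with h
  · simp [h]
  · rw [← Perm.card_filter_lt_and_lt]
    simp [h]

theorem invC_eq_sum_invCEncode (σ : Perm (Fin n) × (Fin n → Fin c)) :
    invC c σ = ∑ j : Fin n, (invCEncode c j (coloredLehmerCode σ j) : ℕ) := by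
  rw [invC, Perm.invNum_eq_sum_lehmerCode, card_colored_ascents, mul_sum, ← sum_add_distrib,
    ← sum_add_distrib]
  rfl

theorem mul_invNum_add_sum_eq_sum_finProdFinEquiv (σ : Perm (Fin n) × (Fin n → Fin c)) :
    c * invNum σ.1 + ∑ j, (σ.2 j : ℕ) = ∑ j, (finProdFinEquiv (coloredLehmerCode σ j) : ℕ) := by
  rw [Perm.invNum_eq_sum_lehmerCode, mul_sum, ← sum_add_distrib]
  exact sum_congr rfl fun _ _ => add_comm _ _

end ColoredPerm

theorem invC_equidistributed_general (c n k : ℕ) :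
    Nat.card {σ : Equiv.Perm (Fin n) × (Fin n → Fin c) // invC c σ = k} =
      Nat.card {σ : Equiv.Perm (Fin n) × (Fin n → Fin c) //
        c * invNum σ.1 + ∑ j, (σ.2 j : ℕ) = k} := by
  simp only [invC_eq_sum_invCEncode, mul_invNum_add_sum_eq_sum_finProdFinEquiv]
  have hcard := card_coloredPerm c n
  let sumEq (y : (j : Fin n) → Fin ((j + 1) * c)) : Prop := ∑ j, (y j : ℕ) = k
  exact (Nat.card_subtype_comp_eq_of_injective
      ((Injective.piMap fun j : Fin n => invCEncode_injective c j).comp coloredLehmerCode_injective)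
      hcard sumEq).trans (Nat.card_subtype_comp_eq_of_injective
      ((Injective.piMap fun _ => finProdFinEquiv.injective).comp coloredLehmerCode_injective)
      hcard sumEq).symm

/-- The statistics `inv_c` and `σ = (π,f) ↦ c·inv(π) + ∑_j f(j)` are
equidistributed on colored permutations of size `n`. -/
theorem invC_equidistributed (c n k : ℕ) (hc : 1 ≤ c) :
    Nat.card {σ : Equiv.Perm (Fin n) × (Fin n → Fin c) // invC c σ = k} =
      Nat.card {σ : Equiv.Perm (Fin n) × (Fin n → Fin c) //
        c * invNum σ.1 + ∑ j, (σ.2 j : ℕ) = k} :=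
  invC_equidistributed_general c n k
end

section
/- For all integers c ≥ 1 and n ≥ 0, the distribution of the colored inversion statistic over all colored permutations of size n satisfies the polynomial identity ∑_{σ} q^{inv_c(σ)} = ∏_{i=1}^{n} [c·i]_q in ℤ[q], where the sum is over all colored permutations σ of size n and [m]_q = 1 + q + ⋯ + q^{m−1}. -/
open Finset

/-- insert `v` at the last position -/
def ins {n : ℕ} (v : Fin (n+1)) (π : Equiv.Perm (Fin n)) : Equiv.Perm (Fin (n+1)) :=
  finSuccEquivLast.trans ((Equiv.optionCongr π).trans (finSuccEquiv' v).symm)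

@[simp] lemma ins_castSucc {n : ℕ} (v : Fin (n+1)) (π : Equiv.Perm (Fin n)) (j : Fin n) :
    ins v π j.castSucc = v.succAbove (π j) := by
  simp [ins]

@[simp] lemma ins_last {n : ℕ} (v : Fin (n+1)) (π : Equiv.Perm (Fin n)) :
    ins v π (Fin.last n) = v := by
  simp [ins]

lemma aux_sum_le (a n : ℕ) : (∑ i ∈ Finset.range n, if a ≤ i then 1 else 0) = n - a := by
  induction n with
  | zero => simp
  | succ n ih => rw [Finset.sum_range_succ, ih]; split <;> omega

lemma aux_sum_lt (a n : ℕ) :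
    (∑ i ∈ Finset.range n, if i < a then 1 else 0) = min a n := by
  induction n with
  | zero => simp
  | succ n ih => rw [Finset.sum_range_succ, ih]; split <;> omega

lemma card_pairs_split {n : ℕ} (P : Fin (n+1) → Fin (n+1) → Prop) [∀ i j, Decidable (P i j)] :
    ((Finset.univ : Finset (Fin (n+1) × Fin (n+1))).filter
      (fun p => p.1 < p.2 ∧ P p.1 p.2)).card =
    ((Finset.univ : Finset (Fin n × Fin n)).filter
      (fun p => p.1 < p.2 ∧ P p.1.castSucc p.2.castSucc)).card +
    (Finset.univ.filter (fun i : Fin n => P i.castSucc (Fin.last n))).card := by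
  rw [Finset.card_filter, Finset.card_filter, Finset.card_filter]
  rw [Fintype.sum_prod_type, Fintype.sum_prod_type]
  dsimp only
  conv_lhs => rw [Fin.sum_univ_castSucc]
  have h1 : ∀ i : Fin n, (∑ j : Fin (n+1), if (i.castSucc < j ∧ P i.castSucc j) then 1 else 0)
      = (∑ j : Fin n, if (i < j ∧ P i.castSucc j.castSucc) then 1 else 0)
        + (if P i.castSucc (Fin.last n) then 1 else 0) := by
    intro i
    rw [Fin.sum_univ_castSucc]
    simp [Fin.castSucc_lt_last, Fin.castSucc_lt_castSucc_iff]
  have h2 : (∑ j : Fin (n+1), if (Fin.last n < j ∧ P (Fin.last n) j) then 1 else 0) = 0 := by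
    apply Finset.sum_eq_zero
    intro j _
    simp [(Fin.le_last j).not_gt]
  calc (∑ i : Fin n, ∑ j : Fin (n+1), if (i.castSucc < j ∧ P i.castSucc j) then 1 else 0)
        + (∑ j : Fin (n+1), if (Fin.last n < j ∧ P (Fin.last n) j) then 1 else 0)
      = (∑ i : Fin n, ((∑ j : Fin n, if (i < j ∧ P i.castSucc j.castSucc) then 1 else 0)
          + (if P i.castSucc (Fin.last n) then 1 else 0))) + 0 := by
        rw [h2, Finset.sum_congr rfl (fun i _ => h1 i)]
    _ = (∑ i : Fin n, ∑ j : Fin n, if (i < j ∧ P i.castSucc j.castSucc) then 1 else 0)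
        + ∑ i : Fin n, if P i.castSucc (Fin.last n) then 1 else 0 := by
        rw [Finset.sum_add_distrib, add_zero]

lemma count_ge {n : ℕ} (v : Fin (n+1)) (π : Equiv.Perm (Fin n)) :
    (Finset.univ.filter (fun i : Fin n => v ≤ (π i).castSucc)).card = n - v.val := by
  rw [Finset.card_filter]
  rw [show (∑ i : Fin n, if v ≤ (π i).castSucc then 1 else 0)
      = ∑ i : Fin n, (fun x : Fin n => if v ≤ x.castSucc then 1 else 0) (π i) from rfl]
  rw [Equiv.sum_comp π (fun x : Fin n => if v ≤ x.castSucc then (1:ℕ) else 0)]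
  have : ∀ x : Fin n, (if v ≤ x.castSucc then (1:ℕ) else 0) = if v.val ≤ x.val then 1 else 0 := by
    intro x; simp [Fin.le_def]
  simp only [this]
  rw [Fin.sum_univ_eq_sum_range (fun m => if v.val ≤ m then 1 else 0), aux_sum_le]

lemma count_lt {n : ℕ} (v : Fin (n+1)) (π : Equiv.Perm (Fin n)) :
    (Finset.univ.filter (fun i : Fin n => (π i).castSucc < v)).card = v.val := by
  rw [Finset.card_filter]
  rw [show (∑ i : Fin n, if (π i).castSucc < v then 1 else 0)
      = ∑ i : Fin n, (fun x : Fin n => if x.castSucc < v then 1 else 0) (π i) from rfl]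
  rw [Equiv.sum_comp π (fun x : Fin n => if x.castSucc < v then (1:ℕ) else 0)]
  have : ∀ x : Fin n, (if x.castSucc < v then (1:ℕ) else 0) = if x.val < v.val then 1 else 0 := by
    intro x; simp [Fin.lt_def]
  simp only [this]
  rw [Fin.sum_univ_eq_sum_range (fun m => if m < v.val then 1 else 0), aux_sum_lt]
  omega

lemma invNum_ins {n : ℕ} (v : Fin (n+1)) (π : Equiv.Perm (Fin n)) :
    invNum (ins v π) = invNum π + (n - v.val) := by
  unfold invNum
  rw [card_pairs_split (P := fun i j => ins v π j < ins v π i)]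
  congr 1
  · apply Finset.card_bij (fun p _ => p) <;> intros <;>
      simp_all [Fin.succAbove_lt_succAbove_iff]
  · rw [← count_ge v π]
    apply Finset.card_bij (fun p _ => p) <;> intros <;>
      simp_all [Fin.lt_succAbove_iff_le_castSucc]

lemma invC_ins {c n : ℕ} (π : Equiv.Perm (Fin n)) (f : Fin n → Fin c)
    (v : Fin (n+1)) (k : Fin c) :
    invC c (ins v π, Fin.snoc f k) =
      invC c (π, f) + ((n - v.val) + k.val + c * (if (k:ℕ) = 0 then 0 else v.val)) := by
  unfold invC
  dsimp only
  rw [invNum_ins]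
  have hsum : (∑ j : Fin (n+1), (((Fin.snoc f k : Fin (n+1) → Fin c) j) : ℕ)) = (∑ j : Fin n, (f j : ℕ)) + k.val := by
    rw [Fin.sum_univ_castSucc]; simp
  rw [hsum]
  rw [card_pairs_split (P := fun i j => ins v π i < ins v π j ∧ (((Fin.snoc f k : Fin (n+1) → Fin c) j) : ℕ) ≠ 0)]
  have e1 : ((Finset.univ : Finset (Fin n × Fin n)).filter
      (fun p => p.1 < p.2 ∧ (ins v π p.1.castSucc < ins v π p.2.castSucc ∧
        (((Fin.snoc f k : Fin (n+1) → Fin c) p.2.castSucc) : ℕ) ≠ 0))).card =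
      ((Finset.univ : Finset (Fin n × Fin n)).filter
      (fun p => p.1 < p.2 ∧ π p.1 < π p.2 ∧ (f p.2 : ℕ) ≠ 0)).card := by
    apply Finset.card_bij (fun p _ => p) <;> intros <;>
      simp_all [Fin.succAbove_lt_succAbove_iff]
  have e2 : (Finset.univ.filter (fun i : Fin n =>
      ins v π i.castSucc < ins v π (Fin.last n) ∧
        (((Fin.snoc f k : Fin (n+1) → Fin c) (Fin.last n)) : ℕ) ≠ 0)).card =
      if (k:ℕ) = 0 then 0 else v.val := by
    by_cases hk : (k:ℕ) = 0
    · simp [hk]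
    · rw [if_neg hk, ← count_lt v π]
      apply Finset.card_bij (fun p _ => p) <;> intros <;>
        simp_all [Fin.succAbove_lt_iff_castSucc_lt]
  rw [e1, e2]
  ring

def Acode (c n : ℕ) (v : Fin (n+1)) (k : Fin c) : ℕ :=
  (n - v.val) + k.val + c * (if (k:ℕ) = 0 then 0 else v.val)

lemma csplit (c m : ℕ) (hc : 1 ≤ c) : c * m = (c-1) * m + m := by
  conv_lhs => rw [show c = (c-1)+1 by omega]
  rw [Nat.add_mul, Nat.one_mul]

lemma Acode_le_n_iff {c n : ℕ} (hc : 1 ≤ c) (v : Fin (n+1)) (k : Fin c) :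
    Acode c n v k ≤ n ↔ (k:ℕ) = 0 := by
  unfold Acode
  have hv : v.val ≤ n := Fin.is_le v
  by_cases hk : (k:ℕ) = 0
  · simp [hk, Nat.sub_le]
  · simp only [if_neg hk]
    have h1 : c * v.val = (c-1) * v.val + v.val := csplit c v.val hc
    constructor
    · intro h; omega
    · intro h; omega

lemma sumA {c n : ℕ} (hc : 1 ≤ c) :
    ∑ vk : Fin (n+1) × Fin c, (Polynomial.X : Polynomial ℤ) ^ (Acode c n vk.1 vk.2) =
      ∑ j ∈ Finset.range (c * (n+1)), (Polynomial.X : Polynomial ℤ) ^ j := by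
  have key : ∀ (v : Fin (n+1)) (k : Fin c), (k:ℕ) ≠ 0 →
      Acode c n v k = n + 1 + ((k.val - 1) + (c-1) * v.val) := by
    intro v k hk
    unfold Acode
    rw [if_neg hk]
    have hv : v.val ≤ n := Fin.is_le v
    have h1 : c * v.val = (c-1) * v.val + v.val := csplit c v.val (by omega)
    have hk1 : 1 ≤ (k:ℕ) := by omega
    omega
  apply Finset.sum_bij (fun vk _ => Acode c n vk.1 vk.2)
  · rintro ⟨v, k⟩ -
    simp only [Finset.mem_range]
    by_cases hk : (k:ℕ) = 0
    · have := (Acode_le_n_iff hc v k).2 hk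
      have : 1 ≤ c := hc
      nlinarith [Fin.is_le v, (Acode_le_n_iff hc v k).2 hk]
    · rw [key v k hk]
      have h2 : (k:ℕ) - 1 < c - 1 := by have := k.isLt; omega
      have h3 : (c-1) * v.val ≤ (c-1) * n := Nat.mul_le_mul_left _ (Fin.is_le v)
      have h4 : c * (n+1) = (c-1) * (n+1) + (n+1) := csplit c (n+1) hc
      have h5 : (c-1) * (n+1) = (c-1) * n + (c-1) := by rw [Nat.mul_add, Nat.mul_one]
      omega
  · rintro ⟨v1, k1⟩ - ⟨v2, k2⟩ - h
    dsimp only at h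
    have hdiv : ∀ (a w : ℕ), a < c - 1 → (a + (c-1) * w) / (c-1) = w := by
      intro a w ha
      rw [Nat.add_mul_div_left _ _ (by omega : 0 < c - 1), Nat.div_eq_of_lt ha, Nat.zero_add]
    by_cases hk1 : (k1:ℕ) = 0 <;> by_cases hk2 : (k2:ℕ) = 0
    · have hv : v1.val = v2.val := by
        have e1 : Acode c n v1 k1 = n - v1.val := by unfold Acode; simp [hk1]
        have e2 : Acode c n v2 k2 = n - v2.val := by unfold Acode; simp [hk2]
        have := Fin.is_le v1; have := Fin.is_le v2
        omega
      exact Prod.ext (Fin.ext hv) (Fin.ext (hk1.trans hk2.symm))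
    · exact absurd ((Acode_le_n_iff hc v2 k2).1 (h ▸ (Acode_le_n_iff hc v1 k1).2 hk1)) hk2
    · exact absurd ((Acode_le_n_iff hc v1 k1).1 (h.symm ▸ (Acode_le_n_iff hc v2 k2).2 hk2)) hk1
    · rw [key v1 k1 hk1, key v2 k2 hk2] at h
      have h' : (k1.val - 1) + (c-1) * v1.val = (k2.val - 1) + (c-1) * v2.val := by omega
      have ha1 : k1.val - 1 < c - 1 := by have := k1.isLt; omega
      have ha2 : k2.val - 1 < c - 1 := by have := k2.isLt; omega
      have hv : v1.val = v2.val :=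
        calc v1.val = ((k1:ℕ) - 1 + (c-1) * v1.val) / (c-1) := (hdiv _ _ ha1).symm
          _ = ((k2:ℕ) - 1 + (c-1) * v2.val) / (c-1) := by rw [h']
          _ = v2.val := hdiv _ _ ha2
      have hk : k1.val = k2.val := by
        rw [hv] at h'
        have := Nat.add_right_cancel h'
        omega
      exact Prod.ext (Fin.ext hv) (Fin.ext hk)
  · intro m hm
    rw [Finset.mem_range] at hm
    by_cases hmn : m ≤ n
    · refine ⟨(⟨n - m, by omega⟩, ⟨0, hc⟩), Finset.mem_univ _, ?_⟩
      unfold Acode; simp; omega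
    · have hc2 : 2 ≤ c := by
        by_contra h
        have : c = 1 := by omega
        subst this
        omega
      set b := m - (n+1) with hb
      have hblt : b < (c-1) * (n+1) := by
        have := csplit c (n+1) hc
        omega
      have hvlt : b / (c-1) < n + 1 :=
        Nat.div_lt_of_lt_mul hblt
      have hklt : b % (c-1) + 1 < c := by
        have := Nat.mod_lt b (by omega : 0 < c - 1)
        omega
      refine ⟨(⟨b / (c-1), hvlt⟩, ⟨b % (c-1) + 1, hklt⟩), Finset.mem_univ _, ?_⟩
      rw [key _ _ (by simp)]
      simp only
      have := Nat.div_add_mod b (c-1)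
      omega
  · intro vk _
    rfl

lemma psi_bijective {c n : ℕ} : Function.Bijective
    (fun x : (Equiv.Perm (Fin n) × (Fin n → Fin c)) × (Fin (n+1) × Fin c) =>
      ((ins x.2.1 x.1.1, Fin.snoc x.1.2 x.2.2) :
        Equiv.Perm (Fin (n+1)) × (Fin (n+1) → Fin c))) := by
  rw [Fintype.bijective_iff_injective_and_card]
  constructor
  · rintro ⟨⟨π1, f1⟩, ⟨v1, k1⟩⟩ ⟨⟨π2, f2⟩, ⟨v2, k2⟩⟩ h
    simp only [Prod.mk.injEq] at h
    obtain ⟨hπ, hf⟩ := h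
    have hv : v1 = v2 := by
      have := congrArg (fun τ : Equiv.Perm (Fin (n+1)) => τ (Fin.last n)) hπ
      simpa using this
    have hk : k1 = k2 := by
      have := congrFun hf (Fin.last n)
      simpa using this
    have hπ' : π1 = π2 := by
      ext j
      have := congrArg (fun τ : Equiv.Perm (Fin (n+1)) => τ j.castSucc) hπ
      simp only [ins_castSucc, hv] at this
      have := Fin.succAbove_right_injective (p := v2) this
      rw [this]
    have hf' : f1 = f2 := by
      funext j
      have := congrFun hf j.castSucc
      simpa using this
    rw [hv, hk, hπ', hf']
  · simp only [Fintype.card_prod, Fintype.card_perm, Fintype.card_fun, Fintype.card_fin]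
    rw [Nat.factorial_succ, pow_succ]
    ring

theorem invC_gen (c : ℕ) (hc : 1 ≤ c) : ∀ n : ℕ,
    ∑ σ : Equiv.Perm (Fin n) × (Fin n → Fin c), (Polynomial.X : Polynomial ℤ) ^ invC c σ =
      ∏ i ∈ Finset.range n,
        ∑ j ∈ Finset.range (c * (i + 1)), (Polynomial.X : Polynomial ℤ) ^ j := by
  intro n
  induction n with
  | zero =>
    simp [invC, invNum]
  | succ n ih =>
    rw [Finset.prod_range_succ, ← ih]
    calc ∑ σ : Equiv.Perm (Fin (n+1)) × (Fin (n+1) → Fin c),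
          (Polynomial.X : Polynomial ℤ) ^ invC c σ
        = ∑ x : (Equiv.Perm (Fin n) × (Fin n → Fin c)) × (Fin (n+1) × Fin c),
            (Polynomial.X : Polynomial ℤ) ^ (invC c x.1 + Acode c n x.2.1 x.2.2) := by
          refine (Fintype.sum_bijective _ psi_bijective _ _ ?_).symm
          rintro ⟨⟨π, f⟩, ⟨v, k⟩⟩
          rw [invC_ins]
          rfl
      _ = (∑ σ : Equiv.Perm (Fin n) × (Fin n → Fin c),
            (Polynomial.X : Polynomial ℤ) ^ invC c σ) *
          (∑ vk : Fin (n+1) × Fin c, (Polynomial.X : Polynomial ℤ) ^ Acode c n vk.1 vk.2) := by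
          rw [Fintype.sum_prod_type]
          rw [Finset.sum_mul_sum]
          simp_rw [pow_add]
      _ = _ := by rw [sumA hc]

/-- The distribution of the colored inversion statistic:
`∑_σ q^{inv_c(σ)} = ∏_{i=1}^{n} [c·i]_q` in `ℤ[q]`. -/
theorem invC_generating_polynomial (c n : ℕ) (hc : 1 ≤ c) :
    ∑ σ : Equiv.Perm (Fin n) × (Fin n → Fin c), (Polynomial.X : Polynomial ℤ) ^ invC c σ =
      ∏ i ∈ Finset.range n,
        ∑ j ∈ Finset.range (c * (i + 1)), (Polynomial.X : Polynomial ℤ) ^ j := by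
  exact invC_gen c hc n
end
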